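/- arXiv:1808.00072 — 2 statements merged into one kernel-verified Lean document; each statement's English description precedes it below -/
import Mathlib

section
/- Let X be a Tychonoff (completely regular Hausdorff) topological space and let P be a prime ideal of C(X). Then Ann(P) ≠ {0} if and only if there exists an isolated point p of X such that P = M_p = {f ∈ C(X) : f(p) = 0}. -/
open Set

/-- `vanishingIdeal U` is `I(U)`: the ideal of continuous functions vanishing on `U`.
For `U = {p}` this is the maximal ideal `M_p = {f ∈ C(X) : f p = 0}`. -/
def vanishingIdeal {X : Type*} [TopologicalSpace X] (U : Set X) : Ideal C(X, ℝ) where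
  carrier := {f | ∀ x ∈ U, f x = 0}
  add_mem' := by
    intro a b ha hb x hx
    simp [ha x hx, hb x hx]
  zero_mem' := by intro x _; simp
  smul_mem' := by
    intro c f hf x hx
    simp [smul_eq_mul, hf x hx]

lemma mem_vanishingIdeal {X : Type*} [TopologicalSpace X] {U : Set X} {f : C(X, ℝ)} :
    f ∈ vanishingIdeal U ↔ ∀ x ∈ U, f x = 0 := Iff.rfl

open Classical in
/-- The continuous indicator function of a clopen singleton. -/
noncomputable def indic {X : Type*} [TopologicalSpace X] [T1Space X] (p : X)
    (hp : IsOpen ({p} : Set X)) : C(X, ℝ) where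
  toFun := fun x => if x = p then (1 : ℝ) else 0
  continuous_toFun := by
    have h : (fun x => if x = p then (1:ℝ) else 0)
        = ({p} : Set X).piecewise (fun _ => (1:ℝ)) (fun _ => (0:ℝ)) := by
      funext x; by_cases h : x = p <;> simp [Set.piecewise, h]
    rw [h]
    exact Continuous.piecewise
      (by simp [IsClopen.frontier_eq ⟨isClosed_singleton, hp⟩]) continuous_const continuous_const

lemma indic_apply_self {X : Type*} [TopologicalSpace X] [T1Space X] (p : X)
    (hp : IsOpen ({p} : Set X)) : indic p hp p = 1 := by simp [indic]

lemma indic_apply_ne {X : Type*} [TopologicalSpace X] [T1Space X] {p x : X}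
    (hp : IsOpen ({p} : Set X)) (hx : x ≠ p) : indic p hp x = 0 := by simp [indic, hx]

/-- A prime ideal `P` of `C(X)`, `X` Tychonoff, is a zero divisor (i.e. `Ann(P) ≠ {0}`)
iff `P = M_p` for some isolated point `p` of `X`. -/
theorem prime_zero_divisor_iff_isolated {X : Type*} [TopologicalSpace X] [T35Space X]
    (P : Ideal C(X, ℝ)) (hP : P.IsPrime) :
    (∃ g : C(X, ℝ), g ≠ 0 ∧ ∀ f ∈ P, g * f = 0) ↔
      ∃ p : X, IsOpen ({p} : Set X) ∧ P = vanishingIdeal {p} := by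
  constructor
  · rintro ⟨g, hg0, hg⟩
    -- find p with g p ≠ 0
    obtain ⟨p, hp⟩ : ∃ p, g p ≠ 0 := by
      by_contra h
      push_neg at h
      exact hg0 (ContinuousMap.ext fun x => by simpa using h x)
    -- every f in P vanishes where g doesn't
    have hvan : ∀ f ∈ P, ∀ x, g x ≠ 0 → f x = 0 := by
      intro f hf x hx
      have := congrArg (fun k : C(X,ℝ) => k x) (hg f hf)
      simp only [ContinuousMap.mul_apply, ContinuousMap.zero_apply] at this
      exact (mul_eq_zero.mp this).resolve_left hx
    -- the cozero set of g is exactly {p}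
    have hU : {x | g x ≠ 0} = {p} := by
      apply Subset.antisymm
      · intro q hq
        simp only [mem_setOf_eq] at hq
        by_contra hqp
        simp only [mem_singleton_iff] at hqp
        obtain ⟨h, hc, hp0, hq1⟩ := CompletelyRegularSpace.completely_regular p {q}
          isClosed_singleton (by simpa using fun h' => hqp h'.symm)
        set h' : C(X, ℝ) := ⟨fun x => (h x : ℝ), continuous_subtype_val.comp hc⟩ with hh'
        set h₁ : C(X, ℝ) := ⟨fun x => max (h' x - 1/2) 0, (h'.continuous.sub continuous_const).max continuous_const⟩ with hh₁
        set h₂ : C(X, ℝ) := ⟨fun x => max (1/2 - h' x) 0, (continuous_const.sub h'.continuous).max continuous_const⟩ with hh₂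
        have hmul : h₁ * h₂ = 0 := by
          ext x
          simp only [ContinuousMap.mul_apply, ContinuousMap.zero_apply, hh₁, hh₂,
            ContinuousMap.coe_mk]
          rcases le_total (h' x) (1/2) with hle | hle
          · rw [max_eq_right (by linarith : h' x - 1/2 ≤ 0)]; ring
          · rw [max_eq_right (by linarith : 1/2 - h' x ≤ 0)]; ring
        have hmem : h₁ ∈ P ∨ h₂ ∈ P := hP.mem_or_mem (by rw [hmul]; exact P.zero_mem)
        have hq1' : h' q = 1 := by
          have := hq1 rfl
          simp only [Pi.one_apply] at this
          simp [hh', this]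
        have hp0' : h' p = 0 := by simp [hh', hp0]
        rcases hmem with hm | hm
        · have := hvan _ hm q hq
          simp only [hh₁, ContinuousMap.coe_mk, hq1'] at this
          rw [max_eq_left (by norm_num)] at this
          norm_num at this
        · have := hvan _ hm p hp
          simp only [hh₂, ContinuousMap.coe_mk, hp0'] at this
          rw [max_eq_left (by norm_num)] at this
          norm_num at this
      · intro q hq
        simp only [mem_singleton_iff] at hq
        simpa [hq] using hp
    have hopen : IsOpen ({p} : Set X) := by
      rw [← hU]
      exact isOpen_ne.preimage g.continuous
    refine ⟨p, hopen, le_antisymm ?_ ?_⟩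
    · intro f hf
      rw [mem_vanishingIdeal]
      rintro x rfl
      exact hvan f hf x hp
    · intro f hf
      rw [mem_vanishingIdeal] at hf
      have hfp : f p = 0 := hf p rfl
      have hfe : f * indic p hopen = 0 := by
        ext x
        by_cases hx : x = p
        · subst hx; simp [hfp]
        · simp [indic_apply_ne hopen hx]
      rcases hP.mem_or_mem (show f * indic p hopen ∈ P by rw [hfe]; exact P.zero_mem) with
        hm | hm
      · exact hm
      · exfalso
        have := hvan _ hm p hp
        rw [indic_apply_self] at this
        norm_num at this
  · rintro ⟨p, hp, rfl⟩
    refine ⟨indic p hp, ?_, ?_⟩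
    · intro h0
      have := congrArg (fun k : C(X,ℝ) => k p) h0
      simp [indic_apply_self] at this
    · intro f hf
      rw [mem_vanishingIdeal] at hf
      ext x
      by_cases hx : x = p
      · subst hx; simp [hf x rfl]
      · simp [indic_apply_ne hp hx]
end

section
/- Let X be a Tychonoff (completely regular Hausdorff) topological space. Suppose that for every ideal I of C(X) there exists f ∈ C(X) with O(I) = Coz(f) (i.e., the image of the map O is the family of cozero sets of X). Then C(X) satisfies the infinite annihilating condition: for every subset S of C(X) there exists a ∈ C(X) such that {g ∈ C(X) : g·s = 0 for all s ∈ S} = {g ∈ C(X) : g·a = 0}. -/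
open Set

/-- `cozUnion S` is `O(S)`: the union of the cozero sets of the members of `S ⊆ C(X, ℝ)`. -/
def cozUnion {X : Type*} [TopologicalSpace X] (S : Set C(X, ℝ)) : Set X :=
  ⋃ f ∈ S, {x : X | f x ≠ 0}

/-- If the image of the map `O` on ideals of `C(X)` is the family of cozero sets of `X`,
then `C(X)` satisfies the infinite annihilating condition: the annihilator of every subset
of `C(X)` is the annihilator of a single element. -/
theorem iac_of_cozUnion_is_cozero {X : Type*} [TopologicalSpace X] [T35Space X]
    (h : ∀ I : Ideal C(X, ℝ), ∃ f : C(X, ℝ),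
      cozUnion ((I : Ideal C(X, ℝ)) : Set C(X, ℝ)) = {x : X | f x ≠ 0}) :
    ∀ S : Set C(X, ℝ), ∃ a : C(X, ℝ),
      {g : C(X, ℝ) | ∀ s ∈ S, g * s = 0} = {g : C(X, ℝ) | g * a = 0} := by
  intro S
  obtain ⟨f, hf⟩ := h (Ideal.span S)
  have hcz : cozUnion ((Ideal.span S : Ideal C(X, ℝ)) : Set C(X, ℝ)) = cozUnion S := by
    apply Subset.antisymm
    · intro x hx
      simp only [cozUnion, mem_iUnion, mem_setOf_eq] at hx ⊢
      obtain ⟨g, hg, hgx⟩ := hx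
      by_contra hc
      push_neg at hc
      apply hgx
      refine Submodule.span_induction (p := fun g _ => g x = 0) ?_ ?_ ?_ ?_ hg
      · exact fun s hs => hc s hs
      · simp
      · intro a b _ _ ha hb
        simp [ha, hb]
      · intro r a _ ha
        simp [ha]
    · intro x hx
      simp only [cozUnion, mem_iUnion, mem_setOf_eq] at hx ⊢
      obtain ⟨s, hs, hsx⟩ := hx
      exact ⟨s, Ideal.subset_span hs, hsx⟩
  refine ⟨f, ?_⟩
  have key : ∀ g : C(X, ℝ), (∀ x ∈ cozUnion S, g x = 0) ↔ (∀ s ∈ S, g * s = 0) := by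
    intro g
    constructor
    · intro hv s hs
      ext x
      by_cases hx : s x = 0
      · simp [hx]
      · have : x ∈ cozUnion S := mem_iUnion₂.2 ⟨s, hs, hx⟩
        simp [hv x this]
    · intro hv x hx
      obtain ⟨s, hs, hsx⟩ := mem_iUnion₂.1 hx
      have := ContinuousMap.congr_fun (hv s hs) x
      simp at this
      rcases this with h1 | h2
      · exact h1
      · exact absurd h2 hsx
  ext g
  simp only [mem_setOf_eq]
  rw [← key]
  rw [hcz] at hf
  constructor
  · intro hg
    ext x
    by_cases hx : f x = 0
    · simp [hx]
    · have : x ∈ cozUnion S := by rw [hf]; exact hx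
      simp [hg x this]
  · intro hg x hx
    have hfx : f x ≠ 0 := by rw [hf] at hx; exact hx
    have := ContinuousMap.congr_fun hg x
    simp at this
    rcases this with h1 | h2
    · exact h1
    · exact absurd h2 hfx
end
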